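/- arXiv:2212.08814 — 5 statements merged into one kernel-verified Lean document; each statement's English description precedes it below -/
import Mathlib

section
/- The Jacobsthal sequence is a strong divisibility sequence: for all positive integers m and n, gcd(J_m, J_n) = J_{gcd(m,n)}. -/
/-- The Jacobsthal sequence: J 0 = 0, J 1 = 1, J (k+2) = J (k+1) + 2 * J k. -/
def J : ℕ → ℕ
  | 0 => 0
  | 1 => 1
  | (k + 2) => J (k + 1) + 2 * J k

lemma J_two_step (k : ℕ) : J (k + 2) = J (k + 1) + 2 * J k := rfl

lemma J_odd : ∀ n, J (n + 1) % 2 = 1 := by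
  intro n
  induction n with
  | zero => rfl
  | succ k ih => rw [J_two_step]; omega

lemma J_coprime_succ : ∀ n, Nat.Coprime (J (n + 1)) (J n) := by
  intro n
  induction n with
  | zero => simp [J, Nat.Coprime]
  | succ k ih =>
    rw [J_two_step]
    have h2 : Nat.Coprime 2 (J (k + 1)) := by
      have := J_odd k
      have : ¬ 2 ∣ J (k + 1) := by omega
      exact (Nat.Prime.coprime_iff_not_dvd Nat.prime_two).mpr this
    have : Nat.Coprime (2 * J k) (J (k + 1)) := Nat.Coprime.mul h2 ih.symm
    have := (Nat.coprime_add_self_left (m := 2 * J k) (n := J (k + 1))).mpr this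
    rwa [Nat.add_comm] at this

lemma J_add (m : ℕ) : ∀ n, J (m + n + 1) = J (m + 1) * J (n + 1) + 2 * J m * J n := by
  intro n
  induction n using Nat.twoStepInduction with
  | zero => simp [J]
  | one =>
    show J (m + 2) = _
    rw [J_two_step]; simp [J]
  | more k ih1 ih2 =>
    have h1 : m + (k + 2) + 1 = (m + k + 1) + 2 := by ring
    rw [h1, J_two_step]
    have h2 : m + k + 1 + 1 = m + (k + 1) + 1 := by ring
    have h3 : k + 2 + 1 = (k + 1) + 2 := by ring
    rw [h2, ih2, ih1, h3, J_two_step (k + 1), J_two_step k]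
    ring

lemma gcd_step (m n : ℕ) : Nat.gcd (J (m + n + 1)) (J n) = Nat.gcd (J (m + 1)) (J n) := by
  rw [J_add, Nat.gcd_add_mul_right_left,
    Nat.Coprime.gcd_mul_right_cancel _ (J_coprime_succ n)]

lemma main_aux : ∀ N m n, m + n ≤ N → 0 < m → 0 < n →
    Nat.gcd (J m) (J n) = J (Nat.gcd m n) := by
  intro N
  induction N with
  | zero => intro m n h hm hn; omega
  | succ N ih =>
    intro m n h hm hn
    rcases lt_trichotomy m n with hlt | heq | hgt
    · have hsub : n = (n - m - 1) + m + 1 := by omega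
      have h2 : Nat.gcd (J m) (J n) = Nat.gcd (J (n - m)) (J m) := by
        rw [Nat.gcd_comm]
        conv_lhs => rw [hsub]
        rw [gcd_step]
        congr 1
        congr 1
        omega
      rw [h2, ih (n - m) m (by omega) (by omega) hm, Nat.gcd_sub_self_left hlt.le,
        Nat.gcd_comm]
    · subst heq; simp
    · have hsub : m = (m - n - 1) + n + 1 := by omega
      have h2 : Nat.gcd (J m) (J n) = Nat.gcd (J (m - n)) (J n) := by
        conv_lhs => rw [hsub]
        rw [gcd_step]
        congr 2
        omega
      rw [h2, ih (m - n) n (by omega) (by omega) hn, Nat.gcd_sub_self_left hgt.le]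

theorem jacobsthal_strong_divisibility (m n : ℕ) (hm : 0 < m) (hn : 0 < n) :
    Nat.gcd (J m) (J n) = J (Nat.gcd m n) :=
  main_aux (m + n) m n le_rfl hm hn
end

section
/- For all positive integers m and n with n ≥ 3, J_n divides J_m if and only if n divides m. -/
lemma threeJ : ∀ k : ℕ, (3 : ℤ) * (J k : ℤ) = 2 ^ k - (-1) ^ k := by
  intro k
  induction k using Nat.twoStepInduction with
  | zero => simp [J]
  | one => simp [J]
  | more k ih1 ih2 =>
      have : (J (k + 2) : ℤ) = (J (k + 1) : ℤ) + 2 * (J k : ℤ) := by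
        push_cast [J]; ring
      rw [this]
      have : (3 : ℤ) * ((J (k+1) : ℤ) + 2 * (J k : ℤ))
          = 3 * (J (k+1) : ℤ) + 2 * (3 * (J k : ℤ)) := by ring
      rw [this, ih2, ih1]
      ring

theorem jacobsthal_dvd_iff (m n : ℕ) (hm : 0 < m) (hn : 3 ≤ n) :
    J n ∣ J m ↔ n ∣ m := by
  have key : J n ∣ J m ↔ ((2:ℤ) ^ n - (-1) ^ n) ∣ (2 ^ m - (-1) ^ m) := by
    rw [← Int.natCast_dvd_natCast, ← threeJ, ← threeJ]
    exact ⟨fun h => mul_dvd_mul_left 3 h, fun h => (mul_dvd_mul_iff_left (by norm_num : (3:ℤ) ≠ 0)).mp h⟩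
  rw [key]
  constructor
  · intro h
    set d : ℤ := 2 ^ n - (-1) ^ n with hd
    set r := m % n with hr
    set q := m / n with hq
    have hrn : r < n := Nat.mod_lt _ (by omega)
    have hmqr : m = n * q + r := (Nat.div_add_mod m n).symm
    have hdvd1 : d ∣ ((2:ℤ) ^ n) ^ q - ((-1) ^ n) ^ q := sub_dvd_pow_sub_pow _ _ _
    have hsplit : (2:ℤ) ^ m - (-1) ^ m
        = (((2:ℤ) ^ n) ^ q - ((-1:ℤ) ^ n) ^ q) * 2 ^ r
          + ((-1:ℤ) ^ n) ^ q * (2 ^ r - (-1) ^ r) := by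
      rw [hmqr]; rw [pow_add, pow_add, pow_mul, pow_mul]; ring
    have hdvd2 : d ∣ ((-1:ℤ) ^ n) ^ q * (2 ^ r - (-1) ^ r) := by
      have := dvd_sub h (Dvd.dvd.mul_right hdvd1 (2 ^ r))
      rw [hsplit] at this
      simpa using this
    have hunit : IsUnit (((-1:ℤ) ^ n) ^ q) := (isUnit_one.neg.pow n).pow q
    have hdvd3 : d ∣ 2 ^ r - (-1) ^ r := (hunit.dvd_mul_left).mp hdvd2
    have hcases : (-1:ℤ) ^ r = 1 ∨ (-1:ℤ) ^ r = -1 := by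
      rcases Nat.even_or_odd r with h | h
      · left; exact h.neg_one_pow
      · right; exact h.neg_one_pow
    have hcasesn : (-1:ℤ) ^ n = 1 ∨ (-1:ℤ) ^ n = -1 := by
      rcases Nat.even_or_odd n with h | h
      · left; exact h.neg_one_pow
      · right; exact h.neg_one_pow
    have h1 : (2:ℤ) ^ r ≤ 2 ^ (n - 1) := pow_le_pow_right₀ (by norm_num) (by omega)
    have h2 : (2:ℤ) ^ (n - 1) * 2 = 2 ^ n := by
      rw [← pow_succ]; congr 1; omega
    have h3 : (8:ℤ) ≤ 2 ^ n := by
      calc (8:ℤ) = 2 ^ 3 := by norm_num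
      _ ≤ 2 ^ n := pow_le_pow_right₀ (by norm_num) hn
    have hrpos : (0:ℤ) < 2 ^ r := by positivity
    have he0 : (0:ℤ) ≤ 2 ^ r - (-1) ^ r := by rcases hcases with h | h <;> omega
    have hlt : (2:ℤ) ^ r - (-1) ^ r < d := by
      rcases hcases with h | h <;> rcases hcasesn with h' | h' <;> simp [hd, h, h'] <;> omega
    have hbound : ((2:ℤ) ^ r - (-1) ^ r).natAbs < d.natAbs :=
      Int.natAbs_lt_natAbs_of_nonneg_of_lt he0 hlt
    have := Int.eq_zero_of_dvd_of_natAbs_lt_natAbs hdvd3 hbound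
    have hr0 : r = 0 := by
      by_contra hr0
      have h4 : (2:ℤ) ≤ 2 ^ r := by
        calc (2:ℤ) = 2 ^ 1 := by norm_num
        _ ≤ 2 ^ r := pow_le_pow_right₀ (by norm_num) (by omega)
      rcases hcases with h | h <;> omega
    exact Nat.dvd_of_mod_eq_zero hr0
  · rintro ⟨q, rfl⟩
    have := sub_dvd_pow_sub_pow ((2:ℤ) ^ n) ((-1:ℤ) ^ n) q
    rwa [← pow_mul, ← pow_mul] at this
end

section
/- If q > 4 is a composite positive integer, then J_q is composite. -/
lemma J_closed : ∀ k : ℕ, (3 : ℤ) * J k = 2 ^ k - (-1) ^ k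
  | 0 => by norm_num [J]
  | 1 => by norm_num [J]
  | (k + 2) => by
    have h1 := J_closed (k + 1)
    have h2 := J_closed k
    have : (J (k + 2) : ℤ) = J (k + 1) + 2 * J k := by
      rw [show J (k + 2) = J (k + 1) + 2 * J k from rfl]; push_cast; ring
    rw [this]
    have e1 : (2 : ℤ) ^ (k + 2) = 4 * 2 ^ k := by ring
    have e2 : ((-1 : ℤ)) ^ (k + 2) = (-1) ^ k := by ring
    have e3 : (2 : ℤ) ^ (k + 1) = 2 * 2 ^ k := by ring
    have e4 : ((-1 : ℤ)) ^ (k + 1) = -((-1) ^ k) := by ring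
    rw [e3, e4] at h1
    rw [e1, e2]
    linarith

lemma J_dvd (m n : ℕ) : J m ∣ J (m * n) := by
  have hd : ((2 : ℤ) ^ m - (-1) ^ m) ∣ (2 ^ (m * n) - (-1) ^ (m * n)) := by
    rw [pow_mul, pow_mul]
    exact sub_dvd_pow_sub_pow _ _ n
  rw [← J_closed m, ← J_closed (m * n)] at hd
  obtain ⟨c, hc⟩ := hd
  have : (J (m * n) : ℤ) = (J m : ℤ) * c := by linarith [hc]
  have hdz : (J m : ℤ) ∣ (J (m * n) : ℤ) := ⟨c, this⟩
  exact_mod_cast Int.natCast_dvd_natCast.mp (by exact_mod_cast hdz)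

lemma J_pos : ∀ k : ℕ, 1 ≤ k → 1 ≤ J k
  | 1, _ => by norm_num [J]
  | 2, _ => by norm_num [J]
  | (k + 3), _ => by
    have := J_pos (k + 2) (by omega)
    rw [show J (k + 3) = J (k + 2) + 2 * J (k + 1) from rfl]; omega

lemma J_step (k : ℕ) (h : 1 ≤ k) : J (k + 1) < J (k + 2) := by
  have := J_pos k h
  rw [show J (k + 2) = J (k + 1) + 2 * J k from rfl]; omega

lemma J_mono (k : ℕ) (h : 1 ≤ k) : J k ≤ J (k + 1) := by
  match k with
  | 0 => omega
  | 1 => norm_num [J]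
  | (k + 2) => exact le_of_lt (J_step (k + 1) (by omega))

lemma J_lt (m n : ℕ) (hm : 2 ≤ m) (hmn : m < n) : J m < J n := by
  induction n with
  | zero => omega
  | succ n ih =>
    rcases Nat.lt_or_ge m n with h | h
    · exact lt_of_lt_of_le (ih h) (J_mono n (by omega))
    · have : m = n := by omega
      subst this
      rcases m with _ | m
      · omega
      · exact J_step m (by omega)

theorem jacobsthal_composite_of_composite_index (q : ℕ) (hq : 4 < q)
    (hcomp : ¬ q.Prime) : 1 < J q ∧ ¬ (J q).Prime := by
  obtain ⟨m, hmd, hm2, hmlt⟩ := Nat.exists_dvd_of_not_prime2 (by omega) hcomp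
  -- get a divisor a of q with 3 ≤ a < q
  obtain ⟨a, had, ha3, halt⟩ : ∃ a, a ∣ q ∧ 3 ≤ a ∧ a < q := by
    rcases Nat.lt_or_ge m 3 with h | h
    · -- m = 2, use q / 2
      have hm : m = 2 := by omega
      subst hm
      obtain ⟨c, hc⟩ := hmd
      refine ⟨c, ⟨2, by omega⟩, by omega, by omega⟩
    · exact ⟨m, hmd, h, hmlt⟩
  obtain ⟨b, hb⟩ := had
  have hdvd : J a ∣ J q := by rw [hb]; exact J_dvd a b
  have h3a : 1 < J a := by
    have : J 2 < J a := by
      rcases Nat.lt_or_ge 2 a with h | h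
      · exact J_lt 2 a le_rfl h
      · omega
    simpa [J] using this
  have hlt : J a < J q := J_lt a q (by omega) halt
  constructor
  · omega
  · intro hp
    rcases (Nat.Prime.eq_one_or_self_of_dvd hp (J a) hdvd) with h | h <;> omega
end

section
/- For every natural number n ≥ 0, 3^n divides J_{3^n}. -/
lemma jlin : ∀ k, 3 * (J k : ℤ) = 2 ^ k - (-1) ^ k
  | 0 => by simp [J]
  | 1 => by simp [J]
  | (k + 2) => by
    have h1 := jlin (k + 1)
    have h2 := jlin k
    simp only [J]
    push_cast
    ring_nf
    ring_nf at h1 h2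
    nlinarith [h1, h2]

lemma pow_dvd : ∀ n : ℕ, (3 : ℤ) ^ (n + 1) ∣ 2 ^ (3 ^ n) + 1
  | 0 => by norm_num
  | (n + 1) => by
    have ih := pow_dvd n
    set a : ℤ := 2 ^ (3 ^ n) with ha
    have h31 : (3 : ℤ) ∣ a + 1 := dvd_trans (dvd_pow_self 3 (Nat.succ_ne_zero n)) ih
    have h3 : (3 : ℤ) ∣ a ^ 2 - a + 1 := by
      have : a ^ 2 - a + 1 = (a + 1) * (a - 2) + 3 := by ring
      rw [this]
      exact dvd_add (Dvd.dvd.mul_right h31 _) dvd_rfl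
    have heq : (2 : ℤ) ^ (3 ^ (n + 1)) + 1 = (a + 1) * (a ^ 2 - a + 1) := by
      rw [ha, ← pow_mul, pow_succ, pow_mul]
      ring
    rw [heq, pow_succ]
    exact mul_dvd_mul ih h3

theorem three_pow_dvd_jacobsthal (n : ℕ) : 3 ^ n ∣ J (3 ^ n) := by
  have hodd : Odd (3 ^ n) := Odd.pow ⟨1, rfl⟩
  have hneg : ((-1 : ℤ)) ^ (3 ^ n) = -1 := hodd.neg_one_pow
  have h := pow_dvd n
  have hJ : 3 * (J (3 ^ n) : ℤ) = 2 ^ (3 ^ n) + 1 := by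
    rw [jlin, hneg]; ring
  rw [← hJ, pow_succ, mul_comm ((3:ℤ)^n) 3] at h
  have : (3 : ℤ) ^ n ∣ (J (3 ^ n) : ℤ) :=
    (mul_dvd_mul_iff_left (by norm_num : (3:ℤ) ≠ 0)).mp h
  exact_mod_cast this
end

section
/- For every positive integer n, the integer 19^n · 3^{n+2} divides J_{19^n · 3^{n+2}}. -/
lemma three_mul_J_int (k : ℕ) : (3 : ℤ) * J k = 2 ^ k - (-1) ^ k := by
  induction k using Nat.twoStepInduction with
  | zero => simp [J]
  | one => norm_num [J]
  | more k ih1 ih2 =>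
      have : (J (k + 2) : ℤ) = J (k + 1) + 2 * J k := by
        rw [show J (k + 2) = J (k + 1) + 2 * J k from rfl]; push_cast; ring
      rw [this]
      ring_nf
      ring_nf at ih1 ih2
      linear_combination ih2 + 2 * ih1

lemma three_mul_J_odd (k : ℕ) (hk : Odd k) : 3 * J k = 2 ^ k + 1 := by
  have h := three_mul_J_int k
  rw [hk.neg_one_pow] at h
  have : (3 * J k : ℤ) = (2 ^ k + 1 : ℕ) := by push_cast; linarith
  exact_mod_cast this

theorem nineteen_three_pow_dvd_jacobsthal (n : ℕ) (hn : 0 < n) :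
    19 ^ n * 3 ^ (n + 2) ∣ J (19 ^ n * 3 ^ (n + 2)) := by
  set m : ℕ := 19 ^ n * 3 ^ (n + 2) with hm
  have hmodd : Odd m := Odd.mul (Odd.pow ⟨9, rfl⟩) (Odd.pow ⟨1, rfl⟩)
  have hJ : 3 * J m = 2 ^ m + 1 := three_mul_J_odd m hmodd
  -- 3-adic part
  have hp3 : Fact (Nat.Prime 3) := ⟨by norm_num⟩
  have hv3 : padicValNat 3 (2 ^ m + 1 ^ m) = padicValNat 3 (2 + 1) + padicValNat 3 m :=
    padicValNat.pow_add_pow (by decide) (by norm_num) (by norm_num) hmodd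
  have hvm3 : padicValNat 3 m = n + 2 := by
    rw [hm, padicValNat.mul (by positivity) (by positivity),
      padicValNat.prime_pow (n + 2)]
    rw [padicValNat.eq_zero_of_not_dvd (by
      intro h
      have := Nat.Prime.dvd_of_dvd_pow (by norm_num) h
      norm_num at this)]
    omega
  have h3 : 3 ^ (n + 3) ∣ 2 ^ m + 1 := by
    have : padicValNat 3 (2 ^ m + 1) = n + 3 := by
      have h1 : padicValNat 3 (2 + 1) = 1 := by
        rw [show (2+1 : ℕ) = 3 ^ 1 by norm_num, padicValNat.prime_pow 1]
      rw [one_pow] at hv3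
      omega
    calc (3:ℕ) ^ (n + 3) = 3 ^ padicValNat 3 (2 ^ m + 1) := by rw [this]
      _ ∣ 2 ^ m + 1 := pow_padicValNat_dvd
  -- 19-adic part
  have hp19 : Fact (Nat.Prime 19) := ⟨by norm_num⟩
  have hmt : m = 9 * (19 ^ n * 3 ^ n) := by
    rw [hm, pow_add]; ring
  set t : ℕ := 19 ^ n * 3 ^ n with ht
  have htodd : Odd t := Odd.mul (Odd.pow ⟨9, rfl⟩) (Odd.pow ⟨1, rfl⟩)
  have h2m : 2 ^ m = 512 ^ t := by
    rw [hmt, pow_mul]; norm_num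
  have hv19 : padicValNat 19 (512 ^ t + 1 ^ t) = padicValNat 19 (512 + 1) + padicValNat 19 t :=
    padicValNat.pow_add_pow (by decide) (by norm_num) (by norm_num) htodd
  have hvt19 : padicValNat 19 t = n := by
    rw [ht, padicValNat.mul (by positivity) (by positivity),
      padicValNat.prime_pow n]
    rw [padicValNat.eq_zero_of_not_dvd (by
      intro h
      have := Nat.Prime.dvd_of_dvd_pow (by norm_num) h
      norm_num at this)]
    omega
  have h513 : padicValNat 19 513 = 1 := by
    have : (513 : ℕ) = 19 ^ 1 * 27 := by norm_num
    rw [this, padicValNat.mul (by norm_num) (by norm_num),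
      padicValNat.prime_pow 1]
    rw [padicValNat.eq_zero_of_not_dvd (by norm_num)]
  have h19 : 19 ^ n ∣ 2 ^ m + 1 := by
    have hv : padicValNat 19 (2 ^ m + 1) = n + 1 := by
      rw [h2m]
      have : (512 : ℕ) + 1 = 513 := by norm_num
      simpa [this, h513, hvt19, Nat.add_comm] using hv19
    calc (19:ℕ) ^ n ∣ 19 ^ padicValNat 19 (2 ^ m + 1) := pow_dvd_pow _ (by omega)
      _ ∣ 2 ^ m + 1 := pow_padicValNat_dvd
  -- combine
  have hcop : Nat.Coprime (3 ^ (n + 3)) (19 ^ n) :=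
    Nat.Coprime.pow _ _ (by norm_num)
  have hdvd : 3 ^ (n + 3) * 19 ^ n ∣ 2 ^ m + 1 :=
    Nat.Coprime.mul_dvd_of_dvd_of_dvd hcop h3 h19
  rw [← hJ] at hdvd
  have : 3 * (19 ^ n * 3 ^ (n + 2)) ∣ 3 * J m := by
    have : 3 ^ (n + 3) * 19 ^ n = 3 * (19 ^ n * 3 ^ (n + 2)) := by ring
    rwa [this] at hdvd
  exact (mul_dvd_mul_iff_left (by norm_num : (3:ℕ) ≠ 0)).mp this
end
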